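/- arXiv:1508.07642 — 2 statements merged into one kernel-verified Lean document; each statement's English description precedes it below -/
import Mathlib

section
/- Let (X,d) be a Polish metric space and let c(x,y) = φ(d(x,y)) where φ:[0,∞)→[0,∞) is convex with φ(0)=0, φ(x)>0 for x>0, and K := sup_{x>0} φ(2x)/φ(x) < ∞. Define p₀ = sup_{x>0} x φ'(x)/φ(x), where φ' is the right derivative of φ. Then 1 ≤ p₀ < ∞ (indeed p₀ ≤ K−1), and the function d̃(x,y) = c(x,y)^{1/p₀} is a distance on X which induces the same topology as d. -/
/-! The bound `x φ'(x) ≤ p φ(x)` says that `log φ - p log` has nonpositive right derivative, so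
`φ(x) / x ^ p` is antitone on `(0, ∞)`. Hence `ψ = φ ^ (1/p)` has `ψ(x) / x` antitone, which makes
`ψ` subadditive; being also monotone, `ψ ∘ d` satisfies the triangle inequality. Convexity with
`φ(0) = 0` gives `φ(x)/x ≤ φ'(x) ≤ (φ(2x) - φ(x))/x`, i.e. `1 ≤ p₀ ≤ K - 1`. Finally `ψ` is
monotone, positive off `0` and continuous at `0`, so `ψ(dₙ) → 0` iff `dₙ → 0`. -/

open MeasureTheory Filter Set
open scoped ENNReal Topology

noncomputable section

/-- Right derivative of a real function. -/
noncomputable def rderiv (φ : ℝ → ℝ) (x : ℝ) : ℝ := derivWithin φ (Set.Ioi x) x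

open Real

theorem antitoneOn_of_hasDerivWithinAt_Ioi_nonpos {D : Set ℝ} (hD : Convex ℝ D) {f f' : ℝ → ℝ}
    (hf : ContinuousOn f D) (hf' : ∀ x ∈ D, HasDerivWithinAt f (f' x) (Ioi x) x)
    (hf'_nonpos : ∀ x ∈ D, f' x ≤ 0) : AntitoneOn f D := by
  intro a ha b hb hab
  have hIcc : Icc a b ⊆ D := hD.ordConnected.out ha hb
  exact image_le_of_deriv_right_le_deriv_boundary (B := fun _ => f a) (hf.mono hIcc)
    (fun x hx => (hf' x (hIcc (Ico_subset_Icc_self hx))).Ici_of_Ioi) le_rfl continuousOn_const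
    (fun x _ => hasDerivWithinAt_const x _ (f a))
    (fun x hx => hf'_nonpos x (hIcc (Ico_subset_Icc_self hx))) ⟨hab, le_rfl⟩

theorem add_le_add_of_antitoneOn_div_self {g : ℝ → ℝ} (hg0 : 0 ≤ g 0)
    (hg : AntitoneOn (fun x => g x / x) (Ioi 0)) {s t : ℝ} (hs : 0 ≤ s) (ht : 0 ≤ t) :
    g (s + t) ≤ g s + g t := by
  rcases hs.eq_or_lt with rfl | hs
  · simpa using hg0
  rcases ht.eq_or_lt with rfl | ht
  · simpa using hg0
  have hst : 0 < s + t := by positivity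
  have key : ∀ u, 0 < u → u ≤ s + t → u * (g (s + t) / (s + t)) ≤ g u := fun u hu hle =>
    (mul_le_mul_of_nonneg_left (hg hu hst hle) hu.le).trans_eq (mul_div_cancel₀ _ hu.ne')
  calc g (s + t) = s * (g (s + t) / (s + t)) + t * (g (s + t) / (s + t)) := by
        field_simp
    _ ≤ g s + g t := add_le_add (key s hs (by linarith)) (key t ht (by linarith))

theorem tendsto_comp_nhds_zero_iff {ψ : ℝ → ℝ} (hψ : Tendsto ψ (𝓝[≥] 0) (𝓝 0))
    (hmono : MonotoneOn ψ (Ici 0)) (hpos : ∀ t > 0, 0 < ψ t)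
    {ι : Type*} {l : Filter ι} {f : ι → ℝ} (hf : ∀ i, 0 ≤ f i) :
    Tendsto (fun i => ψ (f i)) l (𝓝 0) ↔ Tendsto f l (𝓝 0) := by
  refine ⟨fun h => ?_, fun h => hψ.comp (tendsto_nhdsWithin_iff.2 ⟨h, .of_forall hf⟩)⟩
  refine tendsto_order.2 ⟨fun a ha => .of_forall fun i => ha.trans_le (hf i), fun ε hε => ?_⟩
  filter_upwards [h.eventually (gt_mem_nhds (hpos ε hε))] with i hi
  by_contra! hle
  exact hi.not_ge (hmono (mem_Ici.2 hε.le) (mem_Ici.2 (hf i)) hle)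

theorem nonneg_of_zero_of_pos {φ : ℝ → ℝ} (hφ0 : φ 0 = 0) (hφpos : ∀ x > (0:ℝ), 0 < φ x)
    {t : ℝ} (ht : 0 ≤ t) : 0 ≤ φ t := by
  rcases ht.eq_or_lt with rfl | ht
  exacts [hφ0.ge, (hφpos t ht).le]

theorem eq_zero_iff_of_zero_of_pos {φ : ℝ → ℝ} (hφ0 : φ 0 = 0) (hφpos : ∀ x > (0:ℝ), 0 < φ x)
    {t : ℝ} (ht : 0 ≤ t) : φ t = 0 ↔ t = 0 := by
  refine ⟨fun h => ?_, fun h => h ▸ hφ0⟩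
  by_contra ht0
  exact (hφpos t (ht.lt_of_ne' ht0)).ne' h

namespace ConvexOn

variable {φ : ℝ → ℝ}

theorem monotoneOn_div_self (hconv : ConvexOn ℝ (Ici 0) φ) (hφ0 : φ 0 = 0) :
    MonotoneOn (fun x => φ x / x) (Ioi 0) := by
  intro a (ha : 0 < a) b (hb : 0 < b) hab
  simpa [hφ0] using hconv.secant_mono self_mem_Ici ha.le hb.le ha.ne' hb.ne' hab

theorem monotoneOn_Ici (hconv : ConvexOn ℝ (Ici 0) φ) (hφ0 : φ 0 = 0)
    (hφpos : ∀ x > (0:ℝ), 0 < φ x) : MonotoneOn φ (Ici 0) := by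
  intro a (ha : 0 ≤ a) b (hb : 0 ≤ b) hab
  rcases ha.eq_or_lt with rfl | ha
  · rw [hφ0]; exact nonneg_of_zero_of_pos hφ0 hφpos hb
  have hb : 0 < b := ha.trans_le hab
  calc φ a = a * (φ a / a) := (mul_div_cancel₀ _ ha.ne').symm
    _ ≤ a * (φ b / b) := mul_le_mul_of_nonneg_left (hconv.monotoneOn_div_self hφ0 ha hb hab) ha.le
    _ ≤ b * (φ b / b) := mul_le_mul_of_nonneg_right hab (div_nonneg (hφpos b hb).le hb.le)
    _ = φ b := mul_div_cancel₀ _ hb.ne'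

theorem tendsto_nhdsGE_zero (hconv : ConvexOn ℝ (Ici 0) φ) (hφ0 : φ 0 = 0)
    (hφpos : ∀ x > (0:ℝ), 0 < φ x) : Tendsto φ (𝓝[≥] 0) (𝓝 0) := by
  have hle : ∀ t ∈ Icc (0:ℝ) 1, φ t ≤ t * φ 1 := fun t ht => by
    simpa [hφ0] using hconv.2 self_mem_Ici (mem_Ici.2 zero_le_one) (sub_nonneg.2 ht.2) ht.1
      (sub_add_cancel 1 t)
  refine squeeze_zero'
    (eventually_nhdsWithin_of_forall fun t ht => nonneg_of_zero_of_pos hφ0 hφpos ht)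
    (mem_of_superset (Icc_mem_nhdsGE zero_lt_one) hle) ?_
  have hlin : Tendsto (fun t : ℝ => t * φ 1) (𝓝 0) (𝓝 0) := by
    simpa using (tendsto_id (x := 𝓝 (0:ℝ))).mul_const (φ 1)
  exact hlin.mono_left nhdsWithin_le_nhds

theorem one_le_mul_rderiv_div (hconv : ConvexOn ℝ (Ici 0) φ) (hφ0 : φ 0 = 0)
    (hφpos : ∀ x > (0:ℝ), 0 < φ x) {x : ℝ} (hx : 0 < x) : 1 ≤ x * rderiv φ x / φ x := by
  have hx' : x ∈ interior (Ici (0 : ℝ)) := by simpa using hx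
  have h : φ x / x ≤ rderiv φ x := calc
    φ x / x = slope φ 0 x := by simp [slope_def_field, hφ0]
    _ ≤ derivWithin φ (Iio x) x := hconv.slope_le_leftDeriv_of_mem_interior self_mem_Ici hx' hx
    _ ≤ rderiv φ x := hconv.leftDeriv_le_rightDeriv_of_mem_interior hx'
  rwa [le_div_iff₀ (hφpos x hx), one_mul, ← div_le_iff₀' hx]

theorem mul_rderiv_div_le_sub_one (hconv : ConvexOn ℝ (Ici 0) φ)
    (hφpos : ∀ x > (0:ℝ), 0 < φ x) {x : ℝ} (hx : 0 < x) :
    x * rderiv φ x / φ x ≤ φ (2 * x) / φ x - 1 := by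
  have hx' : x ∈ interior (Ici (0 : ℝ)) := by simpa using hx
  have h : rderiv φ x ≤ slope φ x (2 * x) :=
    hconv.rightDeriv_le_slope_of_mem_interior hx' (mem_Ici.2 (by positivity)) (by linarith)
  rw [slope_def_field, show 2 * x - x = x by ring, le_div_iff₀' hx] at h
  rw [div_sub_one (hφpos x hx).ne']
  exact div_le_div_of_nonneg_right h (hφpos x hx).le

theorem antitoneOn_div_rpow (hconv : ConvexOn ℝ (Ioi 0) φ) (hφpos : ∀ x > (0:ℝ), 0 < φ x)
    {p : ℝ} (hub : ∀ x > (0:ℝ), x * rderiv φ x / φ x ≤ p) :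
    AntitoneOn (fun x => φ x / x ^ p) (Ioi 0) := by
  have hcont : ContinuousOn φ (Ioi 0) := by
    simpa using hconv.continuousOn_interior
  have hG : AntitoneOn (fun x => log (φ x) - p * log x) (Ioi 0) := by
    refine antitoneOn_of_hasDerivWithinAt_Ioi_nonpos (convex_Ioi 0)
      ((hcont.log fun x hx => (hφpos x hx).ne').sub
        (continuousOn_const.mul (continuousOn_log.mono fun x (hx : 0 < x) => hx.ne')))
      (f' := fun x => rderiv φ x / φ x - p / x) (fun x (hx : 0 < x) => ?_)
      (fun x (hx : 0 < x) => ?_)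
    · have hφ := hconv.hasDerivWithinAt_rightDeriv_of_mem_interior (by simpa using hx)
      refine (((hasDerivAt_log (hφpos x hx).ne').comp_hasDerivWithinAt x hφ).sub
        ((hasDerivAt_log hx.ne').const_mul p).hasDerivWithinAt).congr_deriv ?_
      simp only [rderiv, div_eq_inv_mul, mul_comm p]
    · have h := hub x hx
      rw [mul_div_assoc, ← le_div_iff₀' hx] at h
      linarith
  intro a (ha : 0 < a) b (hb : 0 < b) hab
  have hexp : ∀ x > (0:ℝ), φ x / x ^ p = exp (log (φ x) - p * log x) := fun x hx => by
    rw [exp_sub, exp_log (hφpos x hx), rpow_def_of_pos hx, mul_comm]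
  simpa only [hexp b hb, hexp a ha, exp_le_exp] using hG ha hb hab

theorem antitoneOn_rpow_inv_div_self (hconv : ConvexOn ℝ (Ici 0) φ)
    (hφpos : ∀ x > (0:ℝ), 0 < φ x) {p : ℝ} (hp : 0 < p)
    (hub : ∀ x > (0:ℝ), x * rderiv φ x / φ x ≤ p) :
    AntitoneOn (fun x => φ x ^ (1 / p) / x) (Ioi 0) := by
  have hroot : ∀ x > (0:ℝ), (φ x / x ^ p) ^ (1 / p) = φ x ^ (1 / p) / x := fun x hx => by
    rw [div_rpow (hφpos x hx).le (rpow_nonneg hx.le p), one_div, rpow_rpow_inv hx.le hp.ne']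
  intro a (ha : 0 < a) b (hb : 0 < b) hab
  dsimp only
  rw [← hroot a ha, ← hroot b hb]
  exact rpow_le_rpow (div_nonneg (hφpos b hb).le (rpow_nonneg hb.le p))
    ((hconv.subset Ioi_subset_Ici_self (convex_Ioi 0)).antitoneOn_div_rpow hφpos hub ha hb hab)
    (by positivity)

end ConvexOn

theorem stmt2_general {X : Type*} [MetricSpace X]
    (φ : ℝ → ℝ) (hconv : ConvexOn ℝ (Set.Ici 0) φ) (hφ0 : φ 0 = 0)
    (hφpos : ∀ x > (0:ℝ), 0 < φ x)
    (K : ℝ) (hK : IsLUB {k : ℝ | ∃ x > (0:ℝ), k = φ (2 * x) / φ x} K)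
    (c : X → X → ℝ) (hc : ∀ x y, c x y = φ (dist x y))
    (p₀ : ℝ) (hp₀ : IsLUB {p : ℝ | ∃ x > (0:ℝ), p = x * rderiv φ x / φ x} p₀) :
    1 ≤ p₀ ∧ p₀ ≤ K - 1 ∧
    (∀ x y : X, (c x y) ^ (1 / p₀ : ℝ) = 0 ↔ x = y) ∧
    (∀ x y : X, (c x y) ^ (1 / p₀ : ℝ) = (c y x) ^ (1 / p₀ : ℝ)) ∧
    (∀ x y z : X,
      (c x z) ^ (1 / p₀ : ℝ) ≤ (c x y) ^ (1 / p₀ : ℝ) + (c y z) ^ (1 / p₀ : ℝ)) ∧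
    (∀ (u : ℕ → X) (x : X),
      Tendsto u atTop (nhds x) ↔
        Tendsto (fun n => (c (u n) x) ^ (1 / p₀ : ℝ)) atTop (nhds 0)) := by
  have hub : ∀ x > (0:ℝ), x * rderiv φ x / φ x ≤ p₀ := fun x hx => hp₀.1 ⟨x, hx, rfl⟩
  have hp1 : 1 ≤ p₀ := (hconv.one_le_mul_rderiv_div hφ0 hφpos one_pos).trans (hub 1 one_pos)
  have hp : 0 < 1 / p₀ := by positivity
  set ψ : ℝ → ℝ := fun t => φ t ^ (1 / p₀)
  have hψmono : MonotoneOn ψ (Ici 0) := fun a ha b hb hab =>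
    rpow_le_rpow (nonneg_of_zero_of_pos hφ0 hφpos ha) (hconv.monotoneOn_Ici hφ0 hφpos ha hb hab)
      hp.le
  have hψ0 : Tendsto ψ (𝓝[≥] 0) (𝓝 0) := by
    have h := (continuousAt_rpow_const 0 _ (Or.inr hp.le)).tendsto.comp
      (hconv.tendsto_nhdsGE_zero hφ0 hφpos)
    rwa [zero_rpow hp.ne'] at h
  have hψsub : ∀ s t, 0 ≤ s → 0 ≤ t → ψ (s + t) ≤ ψ s + ψ t := fun s t =>
    add_le_add_of_antitoneOn_div_self (g := ψ)
      (rpow_nonneg (nonneg_of_zero_of_pos hφ0 hφpos le_rfl) _)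
      (hconv.antitoneOn_rpow_inv_div_self hφpos (by linarith) hub)
  simp only [hc]
  refine ⟨hp1, hp₀.2 ?_, fun x y => ?_, fun x y => by rw [dist_comm], fun x y z => ?_,
    fun u x => ?_⟩
  · rintro p ⟨x, hx, rfl⟩
    linarith [hconv.mul_rderiv_div_le_sub_one hφpos hx, hK.1 ⟨x, hx, rfl⟩]
  · rw [rpow_eq_zero (nonneg_of_zero_of_pos hφ0 hφpos dist_nonneg) hp.ne',
      eq_zero_iff_of_zero_of_pos hφ0 hφpos dist_nonneg, dist_eq_zero]
  · exact (hψmono dist_nonneg (add_nonneg dist_nonneg dist_nonneg) (dist_triangle x y z)).trans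
      (hψsub _ _ dist_nonneg dist_nonneg)
  · rw [tendsto_iff_dist_tendsto_zero]
    exact (tendsto_comp_nhds_zero_iff hψ0 hψmono (fun t ht => rpow_pos_of_pos (hφpos t ht) _)
      fun _ => dist_nonneg).symm

theorem stmt2 {X : Type*} [MetricSpace X] [TopologicalSpace.SeparableSpace X] [CompleteSpace X]
    (φ : ℝ → ℝ) (hconv : ConvexOn ℝ (Set.Ici 0) φ) (hφ0 : φ 0 = 0)
    (hφpos : ∀ x > (0:ℝ), 0 < φ x)
    (K : ℝ) (hK : IsLUB {k : ℝ | ∃ x > (0:ℝ), k = φ (2 * x) / φ x} K)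
    (c : X → X → ℝ) (hc : ∀ x y, c x y = φ (dist x y))
    (p₀ : ℝ) (hp₀ : IsLUB {p : ℝ | ∃ x > (0:ℝ), p = x * rderiv φ x / φ x} p₀) :
    1 ≤ p₀ ∧ p₀ ≤ K - 1 ∧
    (∀ x y : X, (c x y) ^ (1 / p₀ : ℝ) = 0 ↔ x = y) ∧
    (∀ x y : X, (c x y) ^ (1 / p₀ : ℝ) = (c y x) ^ (1 / p₀ : ℝ)) ∧
    (∀ x y z : X,
      (c x z) ^ (1 / p₀ : ℝ) ≤ (c x y) ^ (1 / p₀ : ℝ) + (c y z) ^ (1 / p₀ : ℝ)) ∧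
    (∀ (u : ℕ → X) (x : X),
      Tendsto u atTop (nhds x) ↔
        Tendsto (fun n => (c (u n) x) ^ (1 / p₀ : ℝ)) atTop (nhds 0)) :=
  stmt2_general φ hconv hφ0 hφpos K hK c hc p₀ hp₀
end
end

section
/- Let (X,d) be a Polish metric space, μ a Borel probability measure, and ν̲ a probability measure absolutely continuous with respect to μ with H(ν̲|μ) < ∞. Let f:X→ℝ be a bounded continuous function with ∫ f dν̲ = 0, and for ε small define ν_ε = (1 + ε f) ν̲ and h(ε) = H(ν_ε|μ). Then h is differentiable at 0 with h'(0) = ∫ log(dν̲/dμ) f dν̲. -/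
/-! For `|ε f| ≤ 1/2` the density of `ν_ε = (1 + ε f) ν` with respect to `μ` is
`(1 + ε f) dν/dμ`, so `H(ν_ε|μ) = ∫ (1 + ε f) (log (1 + ε f) + log dν/dμ) dν`.
The `ε`-derivative of this integrand, `(log (1 + ε f) + 1 + log dν/dμ) f`, is dominated by
`(2 + |log dν/dμ|) sup |f|`, which is `ν`-integrable because `H(ν|μ) < ∞`. Differentiating under
the integral sign gives `∫ (1 + log dν/dμ) f dν`, and the constant term vanishes since
`∫ f dν = 0`. -/

open MeasureTheory Filter Set
open scoped ENNReal Topology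

noncomputable section

open Classical in
/-- Relative entropy `H(ν|μ)`. -/
noncomputable def relEnt {X : Type*} [MeasurableSpace X] (ν μ : Measure X) : ℝ≥0∞ :=
  if ν ≪ μ ∧ Integrable (llr ν μ) ν then ENNReal.ofReal (∫ x, llr ν μ x ∂ν) else ∞

open InformationTheory

section RelativeEntropy

variable {X : Type*} [MeasurableSpace X] {μ ν : Measure X}

lemma relEnt_eq_klDiv (h : ν univ = μ univ) : relEnt ν μ = klDiv ν μ := by
  by_cases hfin : ν ≪ μ ∧ Integrable (llr ν μ) ν
  · rw [relEnt, if_pos hfin, klDiv_of_ac_of_integrable hfin.1 hfin.2, measureReal_def,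
      measureReal_def, h, add_sub_cancel_right]
  · rw [relEnt, if_neg hfin, eq_comm, klDiv_eq_top_iff]
    exact fun hac hint => hfin ⟨hac, hint⟩

lemma toReal_relEnt_of_ac [IsFiniteMeasure μ] [IsFiniteMeasure ν] (hac : ν ≪ μ)
    (h : ν univ = μ univ) : (relEnt ν μ).toReal = ∫ x, llr ν μ x ∂ν := by
  rw [relEnt_eq_klDiv h, toReal_klDiv_of_measure_eq hac h]

lemma isProbabilityMeasure_withDensity_ofReal {g : X → ℝ} (hg : Integrable g ν)
    (hg_nonneg : 0 ≤ᵐ[ν] g) (hg_one : ∫ x, g x ∂ν = 1) :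
    IsProbabilityMeasure (ν.withDensity fun x => ENNReal.ofReal (g x)) := by
  constructor
  rw [withDensity_apply _ MeasurableSet.univ, setLIntegral_univ,
    ← ofReal_integral_eq_lintegral_ofReal hg hg_nonneg, hg_one, ENNReal.ofReal_one]

lemma integral_llr_withDensity_ofReal [SigmaFinite μ] [SigmaFinite ν] (hac : ν ≪ μ)
    {g : X → ℝ} (hg : Measurable g) (hg_pos : ∀ᵐ x ∂ν, 0 < g x) :
    ∫ x, llr (ν.withDensity fun x => ENNReal.ofReal (g x)) μ x
        ∂(ν.withDensity fun x => ENNReal.ofReal (g x))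
      = ∫ x, g x * (Real.log (g x) + llr ν μ x) ∂ν := by
  have hrnDeriv := Measure.rnDeriv_withDensity_left (μ := ν) (ν := μ)
    hg.ennreal_ofReal.aemeasurable (ae_of_all _ fun x => ENNReal.ofReal_ne_top)
  rw [integral_withDensity_eq_integral_toReal_smul hg.ennreal_ofReal
    (ae_of_all _ fun _ => ENNReal.ofReal_lt_top)]
  refine integral_congr_ae ?_
  filter_upwards [hac.ae_le hrnDeriv, hg_pos, Measure.rnDeriv_pos hac,
    hac.ae_le (Measure.rnDeriv_lt_top ν μ)] with x hx hgx hpos hlt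
  simp only [llr_def, smul_eq_mul]
  rw [ENNReal.toReal_ofReal hgx.le, hx, ENNReal.toReal_mul,
    ENNReal.toReal_ofReal hgx.le,
    Real.log_mul hgx.ne' (ENNReal.toReal_pos hpos.ne' hlt.ne).ne']

lemma toReal_relEnt_withDensity_ofReal [IsProbabilityMeasure μ] [IsProbabilityMeasure ν]
    (hac : ν ≪ μ) {g : X → ℝ} (hg : Measurable g) (hg_int : Integrable g ν)
    (hg_pos : ∀ᵐ x ∂ν, 0 < g x) (hg_one : ∫ x, g x ∂ν = 1) :
    (relEnt (ν.withDensity fun x => ENNReal.ofReal (g x)) μ).toReal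
      = ∫ x, g x * (Real.log (g x) + llr ν μ x) ∂ν := by
  have := isProbabilityMeasure_withDensity_ofReal hg_int (hg_pos.mono fun _ => le_of_lt) hg_one
  rw [toReal_relEnt_of_ac ((withDensity_absolutelyContinuous _ _).trans hac)
    (by simp only [measure_univ]), integral_llr_withDensity_ofReal hac hg hg_pos]

end RelativeEntropy

lemma Real.abs_log_one_add_le_one {t : ℝ} (ht : |t| ≤ 1 / 2) : |Real.log (1 + t)| ≤ 1 := by
  obtain ⟨ht_lo, ht_hi⟩ := abs_le.1 ht
  have hpos : 0 < 1 + t := by linarith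
  have hlower := Real.one_sub_inv_le_log_of_pos hpos
  have hinv : (1 + t)⁻¹ ≤ 2 := inv_le_of_inv_le₀ (by norm_num) (by linarith)
  rw [abs_le]
  constructor <;> linarith [Real.log_le_sub_one_of_pos hpos]

lemma eventually_forall_abs_mul_le {X : Type*} {f : X → ℝ} {M c : ℝ} (hM : ∀ x, |f x| ≤ M)
    (hc : 0 < c) : ∀ᶠ ε in 𝓝 (0 : ℝ), ∀ x, |ε * f x| ≤ c := by
  have hlim : Tendsto (fun ε : ℝ => |ε| * (|M| + 1)) (𝓝 0) (𝓝 0) := by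
    simpa using (by fun_prop : Continuous fun ε : ℝ => |ε| * (|M| + 1)).tendsto 0
  filter_upwards [hlim.eventually (ge_mem_nhds hc)] with ε hε x
  rw [abs_mul]
  exact (mul_le_mul_of_nonneg_left ((hM x).trans ((le_abs_self M).trans (by linarith)))
    (abs_nonneg ε)).trans hε

lemma hasDerivAt_integral_one_add_mul_mul_log_add {X : Type*} [MeasurableSpace X]
    {ν : Measure X} [IsFiniteMeasure ν] {f L : X → ℝ} (hf : Measurable f) {M : ℝ}
    (hM : ∀ x, |f x| ≤ M) (hL : Integrable L ν) :
    HasDerivAt (fun ε : ℝ => ∫ x, (1 + ε * f x) * (Real.log (1 + ε * f x) + L x) ∂ν)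
      (∫ x, (1 + L x) * f x ∂ν) 0 := by
  set s := {ε : ℝ | ∀ x, |ε * f x| ≤ 1 / 2}
  have hs : s ∈ 𝓝 0 := eventually_forall_abs_mul_le hM one_half_pos
  have hderiv : ∀ x, ∀ ε ∈ s,
      HasDerivAt (fun ε => (1 + ε * f x) * (Real.log (1 + ε * f x) + L x))
        ((Real.log (1 + ε * f x) + 1 + L x) * f x) ε := by
    intro x ε hε
    have hpos : 0 < 1 + ε * f x := by linarith [(abs_le.1 (hε x)).1]
    have hu : HasDerivAt (fun ε : ℝ => 1 + ε * f x) (f x) ε := by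
      simpa using (hasDerivAt_mul_const (f x)).const_add 1
    exact (hu.mul ((hu.log hpos.ne').add_const (L x))).congr_deriv
      (by rw [mul_div_cancel₀ _ hpos.ne']; ring)
  have hbound : ∀ x, ∀ ε ∈ s,
      ‖(Real.log (1 + ε * f x) + 1 + L x) * f x‖ ≤ (2 + |L x|) * M := by
    intro x ε hε
    rw [Real.norm_eq_abs, abs_mul]
    refine mul_le_mul ?_ (hM x) (abs_nonneg _) (by positivity)
    calc |Real.log (1 + ε * f x) + 1 + L x| ≤ |Real.log (1 + ε * f x)| + 1 + |L x| := by
          simpa using abs_add_three (Real.log (1 + ε * f x)) 1 (L x)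
      _ ≤ 2 + |L x| := by linarith [Real.abs_log_one_add_le_one (hε x)]
  have hlog_meas (ε : ℝ) : AEStronglyMeasurable (fun x => Real.log (1 + ε * f x)) ν :=
    (by fun_prop : Measurable fun x => Real.log (1 + ε * f x)).aestronglyMeasurable
  have hmeas (ε : ℝ) : AEStronglyMeasurable
      (fun x => (1 + ε * f x) * (Real.log (1 + ε * f x) + L x)) ν :=
    (by fun_prop : Measurable fun x => 1 + ε * f x).aestronglyMeasurable.mul
      ((hlog_meas ε).add hL.aestronglyMeasurable)
  have hderiv_meas : AEStronglyMeasurable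
      (fun x => (Real.log (1 + 0 * f x) + 1 + L x) * f x) ν :=
    ((hlog_meas 0).add_const 1 |>.add hL.aestronglyMeasurable).mul hf.aestronglyMeasurable
  have key := hasDerivAt_integral_of_dominated_loc_of_deriv_le hs
    (Eventually.of_forall hmeas) (by simpa using hL) hderiv_meas (ae_of_all _ hbound)
    (((integrable_const 2).add hL.abs).mul_const M) (ae_of_all _ hderiv)
  simpa using key.2

theorem stmt13_general {X : Type*} [MetricSpace X]
    [MeasurableSpace X] [BorelSpace X]
    (μ ν : Measure X) [IsProbabilityMeasure μ] [IsProbabilityMeasure ν]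
    (hac : ν ≪ μ) (hH : relEnt ν μ ≠ ∞)
    (f : X → ℝ) (hfc : Continuous f) (M : ℝ) (hM : ∀ x, |f x| ≤ M)
    (hf0 : ∫ x, f x ∂ν = 0) :
    HasDerivAt
      (fun ε : ℝ =>
        (relEnt (ν.withDensity fun x => ENNReal.ofReal (1 + ε * f x)) μ).toReal)
      (∫ x, Real.log ((ν.rnDeriv μ x).toReal) * f x ∂ν) 0 := by
  have hf : Measurable f := hfc.measurable
  have hf_int : Integrable f ν :=
    (integrable_const M).mono' hf.aestronglyMeasurable (ae_of_all _ hM)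
  have hllr : Integrable (llr ν μ) ν := by
    rw [relEnt_eq_klDiv (by simp only [measure_univ]), klDiv_ne_top_iff] at hH
    exact hH.2
  have hentropy : (fun ε : ℝ =>
        (relEnt (ν.withDensity fun x => ENNReal.ofReal (1 + ε * f x)) μ).toReal)
      =ᶠ[𝓝 0] fun ε => ∫ x, (1 + ε * f x) * (Real.log (1 + ε * f x) + llr ν μ x) ∂ν := by
    filter_upwards [eventually_forall_abs_mul_le hM one_half_pos] with ε hε
    have hpos : ∀ x, 0 < 1 + ε * f x := fun x => by linarith [(abs_le.1 (hε x)).1]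
    have hg_int : Integrable (fun x => 1 + ε * f x) ν :=
      (integrable_const 1).add (hf_int.const_mul ε)
    have hg_one : ∫ x, (1 + ε * f x) ∂ν = 1 := by
      rw [integral_add (integrable_const 1) (hf_int.const_mul ε), integral_const_mul, hf0]
      simp
    exact toReal_relEnt_withDensity_ofReal hac (by fun_prop) hg_int (ae_of_all _ hpos) hg_one
  have hderiv := hasDerivAt_integral_one_add_mul_mul_log_add hf hM hllr
  have hvalue : ∫ x, (1 + llr ν μ x) * f x ∂ν
      = ∫ x, Real.log ((ν.rnDeriv μ x).toReal) * f x ∂ν := by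
    simp only [add_mul, one_mul]
    rw [integral_add hf_int (hllr.mul_bdd hf.aestronglyMeasurable (ae_of_all _ hM)), hf0,
      zero_add, llr_def]
  exact (hvalue ▸ hderiv).congr_of_eventuallyEq hentropy

theorem stmt13 {X : Type*} [MetricSpace X] [TopologicalSpace.SeparableSpace X] [CompleteSpace X]
    [MeasurableSpace X] [BorelSpace X]
    (μ ν : Measure X) [IsProbabilityMeasure μ] [IsProbabilityMeasure ν]
    (hac : ν ≪ μ) (hH : relEnt ν μ ≠ ∞)
    (f : X → ℝ) (hfc : Continuous f) (M : ℝ) (hM : ∀ x, |f x| ≤ M)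
    (hf0 : ∫ x, f x ∂ν = 0) :
    HasDerivAt
      (fun ε : ℝ =>
        (relEnt (ν.withDensity fun x => ENNReal.ofReal (1 + ε * f x)) μ).toReal)
      (∫ x, Real.log ((ν.rnDeriv μ x).toReal) * f x ∂ν) 0 :=
  stmt13_general μ ν hac hH f hfc M hM hf0

end
end
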